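/- arXiv:2307.02022 — 9 statements merged into one kernel-verified Lean document; each statement's English description precedes it below -/
import Mathlib

section
/- Let b ∈ [0,1], let N be a finite set, let t ∈ (0,1], and let x : N → [0,1] satisfy t + Σ_{u∈N} x_u ≤ b. Then ((1 − e^{−t})/t) · ∏_{u∈N} e^{−x_u} ≥ e^{−b}. -/
open Finset

/-- A rearrangement of `t + 1 ≤ eᵗ`. -/
lemma Real.exp_neg_le_one_sub_exp_neg_div {t : ℝ} (ht : 0 < t) :
    Real.exp (-t) ≤ (1 - Real.exp (-t)) / t := by
  have hmul : Real.exp (-t) * (t + 1) ≤ 1 :=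
    calc Real.exp (-t) * (t + 1) ≤ Real.exp (-t) * Real.exp t := by
          gcongr; exact Real.add_one_le_exp t
      _ = 1 := by rw [← Real.exp_add, neg_add_cancel, Real.exp_zero]
  rw [le_div_iff₀ ht]
  linarith

theorem randomized_crs_estimate_general {ι : Type*} (N : Finset ι) (b t : ℝ)
    (ht : t ∈ Set.Ioc (0 : ℝ) 1)
    (x : ι → ℝ)
    (hsum : t + ∑ u ∈ N, x u ≤ b) :
    Real.exp (-b) ≤ ((1 - Real.exp (-t)) / t) * ∏ u ∈ N, Real.exp (-(x u)) := by
  calc Real.exp (-b) ≤ Real.exp (-t) * Real.exp (-∑ u ∈ N, x u) := by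
        rw [← Real.exp_add]
        exact Real.exp_le_exp.2 (by linarith)
    _ ≤ (1 - Real.exp (-t)) / t * Real.exp (-∑ u ∈ N, x u) := by
        gcongr
        exact Real.exp_neg_le_one_sub_exp_neg_div ht.1
    _ = (1 - Real.exp (-t)) / t * ∏ u ∈ N, Real.exp (-(x u)) := by
        rw [← sum_neg_distrib, Real.exp_sum]

/-- Key estimate for the randomized `(b/k, e^{-b})` contention resolution scheme:
if `t + ∑_{u ∈ N} x_u ≤ b` with `b, x_u ∈ [0,1]` and `t ∈ (0,1]`, then
`((1 - e^{-t})/t) · ∏_{u ∈ N} e^{-x_u} ≥ e^{-b}`. -/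
theorem randomized_crs_estimate {ι : Type*} (N : Finset ι) (b t : ℝ)
    (hb : b ∈ Set.Icc (0 : ℝ) 1) (ht : t ∈ Set.Ioc (0 : ℝ) 1)
    (x : ι → ℝ) (hx : ∀ u ∈ N, x u ∈ Set.Icc (0 : ℝ) 1)
    (hsum : t + ∑ u ∈ N, x u ≤ b) :
    Real.exp (-b) ≤ ((1 - Real.exp (-t)) / t) * ∏ u ∈ N, Real.exp (-(x u)) :=
  randomized_crs_estimate_general N b t ht x hsum
end

section
/- Let v_1, …, v_n be an inductively k-independent ordering of a finite simple graph G with k ≥ 1, let f : 2^V → ℝ be a monotone, normalized, submodular function, let β > 0, let S ⊆ V, and let w : V → ℝ_{≥0} be weights with w_j = 0 whenever v_j ∉ S. Suppose every vertex outside S satisfies the primal-dual rejection condition: for every v_i ∉ S, ν_f(S, v_i) ≤ (1+β) Σ_{v_j ∈ B_i ∩ S} w_j. Then every independent set T of G satisfies f(T) ≤ f(S) + k(1+β) Σ_{i=1}^n w_i. -/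
/-!
By monotonicity and submodularity, `f T ≤ f S + ∑_{v ∈ T \ S} f_S(v)`, and `f_S(v) ≤ ν_f(S, v)`
since `ν_f` is a marginal value over a subset of `S`. The rejection condition charges each such
`v` to the weights of its earlier neighbours. A vertex `v_j` is charged only by vertices of `T`
that lie in `A_j`; these form an independent subset of `A_j`, so there are at most `k` of them.
-/

open Finset

/-- A set of vertices is independent if no two of its vertices are adjacent. -/
def IsIndep {n : ℕ} (G : SimpleGraph (Fin n)) (S : Finset (Fin n)) : Prop :=
  ∀ u ∈ S, ∀ v ∈ S, ¬ G.Adj u v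

/-- `A_i`: the neighbors of `v_i` that come after `v_i` in the ordering. -/
def laterNbrs {n : ℕ} (G : SimpleGraph (Fin n)) [DecidableRel G.Adj] (i : Fin n) :
    Finset (Fin n) :=
  Finset.univ.filter (fun j => G.Adj i j ∧ i < j)

/-- `B_i`: the neighbors of `v_i` that come before `v_i` in the ordering. -/
def earlierNbrs {n : ℕ} (G : SimpleGraph (Fin n)) [DecidableRel G.Adj] (i : Fin n) :
    Finset (Fin n) :=
  Finset.univ.filter (fun j => G.Adj i j ∧ j < i)

/-- The enumeration of `Fin n` (in its natural order) is an inductively `k`-independent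
ordering of `G`. -/
def InductivelyKIndep {n : ℕ} (G : SimpleGraph (Fin n)) [DecidableRel G.Adj] (k : ℕ) : Prop :=
  ∀ i : Fin n, ∀ S ⊆ laterNbrs G i, IsIndep G S → S.card ≤ k

/-- A set function is submodular. -/
def Submodular {V : Type*} [DecidableEq V] (f : Finset V → ℝ) : Prop :=
  ∀ A B : Finset V, f (A ∪ B) + f (A ∩ B) ≤ f A + f B

/-- The incremental value `ν_f(S, e) = f(S' ∪ {e}) - f(S')` where `S' = {s ∈ S : s < e}`. -/
def incv {V : Type*} [LinearOrder V] (f : Finset V → ℝ) (S : Finset V) (e : V) : ℝ :=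
  f (insert e (S.filter (fun s => s < e))) - f (S.filter (fun s => s < e))

section Submodular

variable {V : Type*} [DecidableEq V] {f : Finset V → ℝ}

theorem Submodular.marginal_le_of_subset (hf : Submodular f) {A B : Finset V} (hAB : A ⊆ B)
    {e : V} (he : e ∉ B) : f (insert e B) - f B ≤ f (insert e A) - f A := by
  have h := hf (insert e A) B
  have hinter : insert e A ∩ B = A := by
    rw [Finset.insert_inter_of_notMem he, Finset.inter_eq_left.mpr hAB]
  rw [Finset.insert_union, Finset.union_eq_right.mpr hAB, hinter] at h
  linarith

theorem Submodular.le_add_sum_marginal (hf : Submodular f) {S D : Finset V}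
    (hSD : Disjoint S D) : f (S ∪ D) ≤ f S + ∑ i ∈ D, (f (insert i S) - f S) := by
  induction D using Finset.induction_on with
  | empty => simp
  | insert a D ha ih =>
    rw [Finset.disjoint_insert_right] at hSD
    have hmarg := hf.marginal_le_of_subset (Finset.subset_union_left (s₂ := D))
      (Finset.notMem_union.mpr ⟨hSD.1, ha⟩)
    rw [Finset.union_insert, Finset.sum_insert ha]
    linarith [ih hSD.2]

theorem Submodular.marginal_le_incv {V : Type*} [LinearOrder V] {f : Finset V → ℝ}
    (hf : Submodular f) {S : Finset V} {e : V} (he : e ∉ S) :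
    f (insert e S) - f S ≤ incv f S e :=
  hf.marginal_le_of_subset (Finset.filter_subset _ S) he

end Submodular

namespace InductivelyKIndep

variable {n k : ℕ} {G : SimpleGraph (Fin n)} [DecidableRel G.Adj]

theorem card_filter_mem_earlierNbrs_le (hG : InductivelyKIndep G k) {T : Finset (Fin n)}
    (hT : IsIndep G T) (j : Fin n) : (T.filter (fun i => j ∈ earlierNbrs G i)).card ≤ k := by
  refine hG j _ (fun i hi => ?_) (fun u hu v hv => hT u (Finset.mem_filter.mp hu).1 v
    (Finset.mem_filter.mp hv).1)
  simp only [earlierNbrs, laterNbrs, Finset.mem_filter, Finset.mem_univ, true_and] at hi ⊢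
  exact ⟨hi.2.1.symm, hi.2.2⟩

theorem sum_sum_earlierNbrs_le (hG : InductivelyKIndep G k) {T : Finset (Fin n)}
    (hT : IsIndep G T) {w : Fin n → ℝ} (hw : ∀ j, 0 ≤ w j) :
    ∑ i ∈ T, ∑ j ∈ earlierNbrs G i, w j ≤ k * ∑ j, w j := by
  rw [Finset.sum_comm' (t' := Finset.univ) (s' := fun j => T.filter (fun i => j ∈ earlierNbrs G i))
    (by simp), Finset.mul_sum]
  refine Finset.sum_le_sum fun j _ => ?_
  rw [Finset.sum_const, nsmul_eq_mul]
  gcongr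
  · exact hw j
  · exact_mod_cast hG.card_filter_mem_earlierNbrs_le hT j

end InductivelyKIndep

theorem primal_dual_opt_bound_general {n k : ℕ}
    (G : SimpleGraph (Fin n)) [DecidableRel G.Adj]
    (hG : InductivelyKIndep G k)
    (f : Finset (Fin n) → ℝ) (hsub : Submodular f)
    (hmono : ∀ A B : Finset (Fin n), A ⊆ B → f A ≤ f B)
    (β : ℝ) (hβ : 0 < β)
    (S : Finset (Fin n)) (w : Fin n → ℝ)
    (hw0 : ∀ j, 0 ≤ w j)
    (hrej : ∀ i ∉ S, incv f S i ≤ (1 + β) * ∑ j ∈ earlierNbrs G i ∩ S, w j)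
    (T : Finset (Fin n)) (hT : IsIndep G T) :
    f T ≤ f S + k * (1 + β) * ∑ i, w i := by
  calc f T ≤ f (S ∪ T \ S) := hmono _ _ (by simp)
    _ ≤ f S + ∑ i ∈ T \ S, (f (insert i S) - f S) :=
        hsub.le_add_sum_marginal Finset.disjoint_sdiff
    _ ≤ f S + ∑ i ∈ T \ S, (1 + β) * ∑ j ∈ earlierNbrs G i ∩ S, w j := by
        gcongr with i hi
        have hiS := (Finset.mem_sdiff.mp hi).2
        exact (hsub.marginal_le_incv hiS).trans (hrej i hiS)
    _ ≤ f S + (1 + β) * ∑ i ∈ T, ∑ j ∈ earlierNbrs G i, w j := by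
        rw [← Finset.mul_sum]
        gcongr
        calc ∑ i ∈ T \ S, ∑ j ∈ earlierNbrs G i ∩ S, w j
            ≤ ∑ i ∈ T \ S, ∑ j ∈ earlierNbrs G i, w j :=
              Finset.sum_le_sum fun i _ => Finset.sum_le_sum_of_subset_of_nonneg
                Finset.inter_subset_left fun j _ _ => hw0 j
          _ ≤ ∑ i ∈ T, ∑ j ∈ earlierNbrs G i, w j :=
              Finset.sum_le_sum_of_subset_of_nonneg Finset.sdiff_subset
                fun i _ _ => Finset.sum_nonneg fun j _ => hw0 j
    _ ≤ f S + (1 + β) * (k * ∑ j, w j) := by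
        gcongr
        exact hG.sum_sum_earlierNbrs_le hT hw0
    _ = f S + k * (1 + β) * ∑ i, w i := by ring

/-- Dual feasibility bound (Corollary `opt-bound`): if every vertex outside the stack `S`
satisfies the primal-dual rejection condition, then for every independent set `T`,
`f(T) ≤ f(S) + k(1+β) ∑ᵢ wᵢ`. -/
theorem primal_dual_opt_bound {n k : ℕ} (hk : 1 ≤ k)
    (G : SimpleGraph (Fin n)) [DecidableRel G.Adj]
    (hG : InductivelyKIndep G k)
    (f : Finset (Fin n) → ℝ) (hsub : Submodular f)
    (hmono : ∀ A B : Finset (Fin n), A ⊆ B → f A ≤ f B) (hnorm : f ∅ = 0)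
    (β : ℝ) (hβ : 0 < β)
    (S : Finset (Fin n)) (w : Fin n → ℝ)
    (hw0 : ∀ j, 0 ≤ w j) (hwS : ∀ j ∉ S, w j = 0)
    (hrej : ∀ i ∉ S, incv f S i ≤ (1 + β) * ∑ j ∈ earlierNbrs G i ∩ S, w j)
    (T : Finset (Fin n)) (hT : IsIndep G T) :
    f T ≤ f S + k * (1 + β) * ∑ i, w i :=
  primal_dual_opt_bound_general G hG f hsub hmono β hβ S w hw0 hrej T hT
end

section
/- Let v_1, …, v_n enumerate the vertices of a finite simple graph G, let f : 2^V → ℝ be a normalized submodular function, let β > 0, let S ⊆ V, and let w : V → ℝ_{≥0} satisfy w_j = 0 for v_j ∉ S and, for every v_i ∈ S, both w_i = ν_f(S, v_i) − Σ_{v_j ∈ B_i ∩ S} w_j and ν_f(S, v_i) ≥ (1+β) Σ_{v_j ∈ B_i ∩ S} w_j. Then f(S) ≤ ((1+β)/β) Σ_{i=1}^n w_i. -/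
open Finset

/-! The incremental values of the elements of `S` telescope to `f S - f ∅`, and the acceptance
inequality `(1 + β) B ≤ ν` with `w = ν - B` gives `β B ≤ w`, hence `ν = w + B ≤ (1 + β) / β · w`
for every `v_i ∈ S`. Summing over `S` gives the bound. -/

section IncrementalValue

variable {V : Type*} [LinearOrder V] (f : Finset V → ℝ)

theorem incv_insert_of_not_lt {T : Finset V} {a i : V} (h : ¬ a < i) :
    incv f (insert a T) i = incv f T i := by
  simp only [incv, filter_insert, if_neg h]

theorem incv_insert_of_forall_lt {T : Finset V} {a : V} (ha : ∀ x ∈ T, x < a) :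
    incv f (insert a T) a = f (insert a T) - f T := by
  have hT : (insert a T).filter (· < a) = T := by
    rw [filter_insert, if_neg (lt_irrefl a), filter_eq_self]
    exact ha
  rw [incv, hT]

theorem sum_incv_eq_sub (S : Finset V) : ∑ i ∈ S, incv f S i = f S - f ∅ := by
  induction S using Finset.induction_on_max with
  | empty => simp
  | insert a T ha ih =>
    have haT : a ∉ T := fun h => lt_irrefl a (ha a h)
    rw [sum_insert haT, incv_insert_of_forall_lt f ha,
      sum_congr rfl fun i hi => incv_insert_of_not_lt f (ha i hi).not_gt, ih]
    ring

end IncrementalValue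

theorem le_one_add_div_mul_sub_of_one_add_mul_le {ν B β : ℝ} (hβ : 0 < β)
    (h : (1 + β) * B ≤ ν) : ν ≤ (1 + β) / β * (ν - B) := by
  rw [div_mul_eq_mul_div, le_div_iff₀ hβ]
  nlinarith

theorem primal_dual_upper_bound_mu_general {n : ℕ}
    (G : SimpleGraph (Fin n)) [DecidableRel G.Adj]
    (f : Finset (Fin n) → ℝ) (hnorm : f ∅ = 0)
    (β : ℝ) (hβ : 0 < β)
    (S : Finset (Fin n)) (w : Fin n → ℝ)
    (hwS : ∀ j ∉ S, w j = 0)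
    (hwdef : ∀ i ∈ S, w i = incv f S i - ∑ j ∈ earlierNbrs G i ∩ S, w j)
    (hacc : ∀ i ∈ S, (1 + β) * ∑ j ∈ earlierNbrs G i ∩ S, w j ≤ incv f S i) :
    f S ≤ ((1 + β) / β) * ∑ i, w i := by
  calc f S = ∑ i ∈ S, incv f S i := by rw [sum_incv_eq_sub, hnorm, sub_zero]
    _ ≤ ∑ i ∈ S, (1 + β) / β * w i := sum_le_sum fun i hi =>
        hwdef i hi ▸ le_one_add_div_mul_sub_of_one_add_mul_le hβ (hacc i hi)
    _ = (1 + β) / β * ∑ i, w i := by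
        rw [← mul_sum, sum_subset (subset_univ S) fun j _ hj => hwS j hj]

/-- Upper bound on the stack value (`upper-bound-mu`): under the weight recurrence and the
acceptance inequality on `S`, `f(S) ≤ ((1+β)/β) ∑ᵢ wᵢ`. -/
theorem primal_dual_upper_bound_mu {n : ℕ}
    (G : SimpleGraph (Fin n)) [DecidableRel G.Adj]
    (f : Finset (Fin n) → ℝ) (hsub : Submodular f) (hnorm : f ∅ = 0)
    (β : ℝ) (hβ : 0 < β)
    (S : Finset (Fin n)) (w : Fin n → ℝ)
    (hw0 : ∀ j, 0 ≤ w j) (hwS : ∀ j ∉ S, w j = 0)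
    (hwdef : ∀ i ∈ S, w i = incv f S i - ∑ j ∈ earlierNbrs G i ∩ S, w j)
    (hacc : ∀ i ∈ S, (1 + β) * ∑ j ∈ earlierNbrs G i ∩ S, w j ≤ incv f S i) :
    f S ≤ ((1 + β) / β) * ∑ i, w i :=
  primal_dual_upper_bound_mu_general G f hnorm β hβ S w hwS hwdef hacc
end

section
/- Let v_1, …, v_n be an inductively k-independent ordering of a finite simple graph G with k ≥ 1, let f : 2^V → ℝ be a monotone, normalized, submodular function, and let β > 0. Suppose S ⊆ V and w : V → ℝ_{≥0} satisfy: (i) w_j = 0 for v_j ∉ S; (ii) for every v_i ∈ S, ν_f(S, v_i) > (1+β) Σ_{v_j ∈ B_i ∩ S} w_j and w_i = ν_f(S, v_i) − Σ_{v_j ∈ B_i ∩ S} w_j; (iii) for every v_i ∉ S, ν_f(S, v_i) ≤ (1+β) Σ_{v_j ∈ B_i ∩ S} w_j. Let S′ ⊆ S be independent with the property that every v_{i′} ∈ S \ S′ has a neighbor v_i ∈ S′ with i > i′. Then every independent set T of G satisfies f(T) ≤ (1+β)(1/β + k) f(S′); in particular, for β = 1/√k, f(T) ≤ (k + 1 +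 2√k) f(S′). -/
open Finset

/-! Each vertex `i ∈ S` has `ν_f(S, i) = w_i + Σ_{B_i ∩ S} w_j` with `β Σ_{B_i ∩ S} w_j < w_i`,
so telescoping gives `f S ≤ (1 + 1/β) Σ_S w`. A vertex of `T \ S` adds at most `(1 + β)` times
the weight of its earlier neighbours in `S`, and a vertex `j ∈ S` is an earlier neighbour of at
most `k` vertices of the independent set `T`; by submodularity `f T ≤ f S + (1 + β) k Σ_S w`.
Finally, every vertex of `S \ S'` is an earlier neighbour of some vertex of `S'`, so `Σ_S w` is
at most `Σ_{i ∈ S'} ν_f(S, i) ≤ Σ_{i ∈ S'} ν_f(S', i) = f S'`. -/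

theorem IsIndep.mono {n : ℕ} {G : SimpleGraph (Fin n)} {S T : Finset (Fin n)}
    (hT : IsIndep G T) (hST : S ⊆ T) : IsIndep G S :=
  fun u hu v hv => hT u (hST hu) v (hST hv)

theorem Submodular.sub_le_sub_of_subset {V : Type*} [DecidableEq V] {f : Finset V → ℝ}
    (hsub : Submodular f) {X Y : Finset V} (hYX : Y ⊆ X) {i : V}
    (hi : i ∉ X) : f (insert i X) - f X ≤ f (insert i Y) - f Y := by
  have h := hsub (insert i Y) X
  rw [insert_union, union_eq_right.2 hYX, insert_inter_of_notMem hi,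
    inter_eq_left.2 hYX] at h
  linarith

section IncrementalValue

variable {V : Type*} [LinearOrder V] {f : Finset V → ℝ}

theorem incv_insert_of_le (s : Finset V) {a i : V} (hia : i ≤ a) :
    incv f (insert a s) i = incv f s i := by
  simp only [incv, filter_insert, if_neg (not_lt.2 hia)]

theorem sum_incv (hnorm : f ∅ = 0) (S : Finset V) : ∑ i ∈ S, incv f S i = f S := by
  induction S using Finset.induction_on_max with
  | empty => simp [hnorm]
  | insert a s hlt ih =>
    have ha : a ∉ s := fun h => lt_irrefl a (hlt a h)
    have hfilter : s.filter (· < a) = s := filter_true_of_mem hlt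
    rw [sum_insert ha, sum_congr rfl fun i hi => incv_insert_of_le s (hlt i hi).le, ih]
    simp only [incv, filter_insert, lt_irrefl, if_false, hfilter]
    ring

theorem Submodular.incv_le_incv_of_subset (hsub : Submodular f) {S' S : Finset V}
    (h : S' ⊆ S) (i : V) : incv f S i ≤ incv f S' i :=
  hsub.sub_le_sub_of_subset (filter_subset_filter _ h) (by simp)

theorem Submodular.le_add_sum_incv_sdiff (hsub : Submodular f) (S U : Finset V) :
    f (S ∪ U) ≤ f S + ∑ i ∈ U \ S, incv f S i := by
  induction U using Finset.induction_on with
  | empty => simp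
  | insert a U haU ih =>
    by_cases haS : a ∈ S
    · rwa [union_insert, insert_eq_of_mem (mem_union_left U haS), insert_sdiff_of_mem _ haS]
    · have haSU : a ∉ S ∪ U := by simp [haS, haU]
      have hstep : f (insert a (S ∪ U)) - f (S ∪ U) ≤ incv f S a :=
        hsub.sub_le_sub_of_subset ((filter_subset _ S).trans subset_union_left) haSU
      rw [union_insert, insert_sdiff_of_notMem _ haS, sum_insert (by simp [haU])]
      linarith

theorem le_one_add_one_div_mul_sum (hnorm : f ∅ = 0) {β : ℝ} (hβ : 0 < β)
    {S : Finset V} {w d : V → ℝ}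
    (h : ∀ i ∈ S, (1 + β) * d i ≤ incv f S i ∧ w i = incv f S i - d i) :
    f S ≤ (1 + 1 / β) * ∑ i ∈ S, w i := by
  rw [← sum_incv hnorm S, mul_sum]
  refine sum_le_sum fun i hi => ?_
  obtain ⟨hd, hw⟩ := h i hi
  have hdw : d i ≤ w i / β := by rw [le_div_iff₀ hβ]; linarith
  calc incv f S i = w i + d i := by linarith
    _ ≤ w i + w i / β := by linarith
    _ = (1 + 1 / β) * w i := by ring

end IncrementalValue

section PrimalDual

variable {n : ℕ} {G : SimpleGraph (Fin n)} [DecidableRel G.Adj] {w : Fin n → ℝ}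

theorem InductivelyKIndep.sum_sum_earlierNbrs_le_s8 {k : ℕ} (hG : InductivelyKIndep G k)
    (hw0 : ∀ j, 0 ≤ w j) (S : Finset (Fin n)) {T : Finset (Fin n)} (hT : IsIndep G T) :
    ∑ i ∈ T, ∑ j ∈ earlierNbrs G i ∩ S, w j ≤ k * ∑ j ∈ S, w j := by
  have hswap : ∑ i ∈ T, ∑ j ∈ earlierNbrs G i ∩ S, w j
      = ∑ j ∈ S, ∑ _i ∈ T ∩ laterNbrs G j, w j :=
    sum_comm' fun i j => by
      simp only [earlierNbrs, laterNbrs, mem_inter, mem_filter, mem_univ, true_and,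
        G.adj_comm i j]
      tauto
  rw [hswap, mul_sum]
  refine sum_le_sum fun j _ => ?_
  rw [sum_const, nsmul_eq_mul]
  gcongr
  · exact hw0 j
  · exact_mod_cast hG j _ inter_subset_right (hT.mono inter_subset_left)

theorem sum_le_sum_sum_earlierNbrs (hw0 : ∀ j, 0 ≤ w j) {A B C : Finset (Fin n)}
    (hAC : A ⊆ C) (h : ∀ j ∈ A, ∃ i ∈ B, j < i ∧ G.Adj i j) :
    ∑ j ∈ A, w j ≤ ∑ i ∈ B, ∑ j ∈ earlierNbrs G i ∩ C, w j := by
  choose! c hcB hclt hcadj using h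
  rw [← sum_fiberwise_of_maps_to hcB w]
  refine sum_le_sum fun i _ => sum_le_sum_of_subset_of_nonneg ?_ fun j _ _ => hw0 j
  intro j hj
  obtain ⟨hjA, rfl⟩ := mem_filter.1 hj
  simp [earlierNbrs, hcadj j hjA, hclt j hjA, hAC hjA]

theorem sum_le_of_forall_eq_incv_sub {f : Finset (Fin n) → ℝ} (hsub : Submodular f)
    (hnorm : f ∅ = 0) (hw0 : ∀ j, 0 ≤ w j) {S S' : Finset (Fin n)} (hS' : S' ⊆ S)
    (hw : ∀ i ∈ S, w i = incv f S i - ∑ j ∈ earlierNbrs G i ∩ S, w j)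
    (hpop : ∀ i' ∈ S \ S', ∃ i ∈ S', i' < i ∧ G.Adj i i') :
    ∑ j ∈ S, w j ≤ f S' := by
  have hpopped := sum_le_sum_sum_earlierNbrs hw0 sdiff_subset hpop
  calc ∑ j ∈ S, w j = ∑ j ∈ S \ S', w j + ∑ i ∈ S', w i := (sum_sdiff hS').symm
    _ ≤ ∑ i ∈ S', (w i + ∑ j ∈ earlierNbrs G i ∩ S, w j) := by rw [sum_add_distrib]; linarith
    _ = ∑ i ∈ S', incv f S i := sum_congr rfl fun i hi => by rw [hw i (hS' hi)]; ring
    _ ≤ ∑ i ∈ S', incv f S' i := sum_le_sum fun i _ => hsub.incv_le_incv_of_subset hS' i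
    _ = f S' := sum_incv hnorm S'

end PrimalDual

theorem primal_dual_monotone_guarantee_general {n k : ℕ}
    (G : SimpleGraph (Fin n)) [DecidableRel G.Adj]
    (hG : InductivelyKIndep G k)
    (f : Finset (Fin n) → ℝ) (hsub : Submodular f)
    (hmono : ∀ A B : Finset (Fin n), A ⊆ B → f A ≤ f B) (hnorm : f ∅ = 0)
    (β : ℝ) (hβ : 0 < β)
    (S : Finset (Fin n)) (w : Fin n → ℝ)
    (hw0 : ∀ j, 0 ≤ w j)
    (hin : ∀ i ∈ S, (1 + β) * ∑ j ∈ earlierNbrs G i ∩ S, w j < incv f S i ∧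
      w i = incv f S i - ∑ j ∈ earlierNbrs G i ∩ S, w j)
    (hout : ∀ i ∉ S, incv f S i ≤ (1 + β) * ∑ j ∈ earlierNbrs G i ∩ S, w j)
    (S' : Finset (Fin n)) (hS'sub : S' ⊆ S)
    (hpop : ∀ i' ∈ S \ S', ∃ i ∈ S', i' < i ∧ G.Adj i i')
    (T : Finset (Fin n)) (hT : IsIndep G T) :
    f T ≤ (1 + β) * (1 / β + k) * f S' ∧
    (β = 1 / Real.sqrt k → f T ≤ (k + 1 + 2 * Real.sqrt k) * f S') := by
  set W := ∑ j ∈ S, w j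
  have hfS : f S ≤ (1 + 1 / β) * W :=
    le_one_add_one_div_mul_sum hnorm hβ fun i hi => ⟨(hin i hi).1.le, (hin i hi).2⟩
  have hrest : ∑ i ∈ T \ S, incv f S i ≤ (1 + β) * (k * W) := calc
    _ ≤ ∑ i ∈ T \ S, (1 + β) * ∑ j ∈ earlierNbrs G i ∩ S, w j :=
      sum_le_sum fun i hi => hout i (mem_sdiff.1 hi).2
    _ ≤ (1 + β) * (k * W) := by
      rw [← mul_sum]
      exact mul_le_mul_of_nonneg_left
        (hG.sum_sum_earlierNbrs_le_s8 hw0 S (hT.mono sdiff_subset)) (by linarith)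
  have hcharge : W ≤ f S' :=
    sum_le_of_forall_eq_incv_sub hsub hnorm hw0 hS'sub (fun i hi => (hin i hi).2) hpop
  have hbound : f T ≤ (1 + β) * (1 / β + k) * f S' := calc
    f T ≤ f (S ∪ T) := hmono _ _ subset_union_right
    _ ≤ f S + ∑ i ∈ T \ S, incv f S i := hsub.le_add_sum_incv_sdiff S T
    _ ≤ (1 + 1 / β) * W + (1 + β) * (k * W) := by linarith
    _ = (1 + β) * (1 / β + k) * W := by field_simp; ring
    _ ≤ (1 + β) * (1 / β + k) * f S' := mul_le_mul_of_nonneg_left hcharge (by positivity)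
  refine ⟨hbound, fun hβk => ?_⟩
  -- `1 / √0 = 0`, so `0 < β` rules out `k = 0`
  have hk : 0 < Real.sqrt k := one_div_pos.1 (hβk ▸ hβ)
  have hsq : Real.sqrt k ^ 2 = k := Real.sq_sqrt (Nat.cast_nonneg k)
  convert hbound using 2
  rw [hβk, one_div_one_div]
  field_simp
  linear_combination hsq

/-- Guarantee of the deterministic primal-dual algorithm for monotone submodular maximization:
given the invariants of the algorithm (stack `S`, weights `w`, output `S'`), every independent
set `T` satisfies `f(T) ≤ (1+β)(1/β + k) f(S')`; in particular for `β = 1/√k`,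
`f(T) ≤ (k + 1 + 2√k) f(S')`. -/
theorem primal_dual_monotone_guarantee {n k : ℕ} (hk : 1 ≤ k)
    (G : SimpleGraph (Fin n)) [DecidableRel G.Adj]
    (hG : InductivelyKIndep G k)
    (f : Finset (Fin n) → ℝ) (hsub : Submodular f)
    (hmono : ∀ A B : Finset (Fin n), A ⊆ B → f A ≤ f B) (hnorm : f ∅ = 0)
    (β : ℝ) (hβ : 0 < β)
    (S : Finset (Fin n)) (w : Fin n → ℝ)
    (hw0 : ∀ j, 0 ≤ w j) (hwS : ∀ j ∉ S, w j = 0)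
    (hin : ∀ i ∈ S, (1 + β) * ∑ j ∈ earlierNbrs G i ∩ S, w j < incv f S i ∧
      w i = incv f S i - ∑ j ∈ earlierNbrs G i ∩ S, w j)
    (hout : ∀ i ∉ S, incv f S i ≤ (1 + β) * ∑ j ∈ earlierNbrs G i ∩ S, w j)
    (S' : Finset (Fin n)) (hS'sub : S' ⊆ S) (hS'ind : IsIndep G S')
    (hpop : ∀ i' ∈ S \ S', ∃ i ∈ S', i' < i ∧ G.Adj i i')
    (T : Finset (Fin n)) (hT : IsIndep G T) :
    f T ≤ (1 + β) * (1 / β + k) * f S' ∧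
    (β = 1 / Real.sqrt k → f T ≤ (k + 1 + 2 * Real.sqrt k) * f S') :=
  primal_dual_monotone_guarantee_general G hG f hsub hmono hnorm β hβ S w hw0 hin hout S' hS'sub
    hpop T hT
end

section
/- Let f : 2^V → ℝ_{≥0} be a nonnegative submodular function on a finite ground set V, let T ⊆ V be a fixed set, let p ∈ [0,1], and let S be a random subset of V (drawn from an arbitrary, not necessarily independent, finitely supported probability distribution over subsets of V) such that Pr[v ∈ S] ≤ p for every v ∈ V. Then E[f(S ∪ T)] ≥ (1 − p) · f(T). -/
/-!
Replace `f` by the nonnegative submodular `g A = f (A ∪ T)`, so that the claim is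
`E[g S] ≥ (1 - p) g ∅`. List the ground elements `u₁, u₂, …` by decreasing inclusion
probability `p₁ ≥ p₂ ≥ …` and let `Aᵢ = {u₁, …, uᵢ}`. Telescoping `g S` along the sets `S ∩ Aᵢ`,
diminishing returns bounds each expected increment below by `pᵢ (g Aᵢ - g Aᵢ₋₁)`; by Abel
summation the resulting lower bound is `(1 - p₁) g ∅ + ∑ (pᵢ - pᵢ₊₁) g Aᵢ + pₙ g Aₙ`, in which
every term but the first is nonnegative.
-/

open Finset

namespace Submodular

variable {V : Type*} [DecidableEq V] {f : Finset V → ℝ}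

theorem comp_union_right (hf : Submodular f) (T : Finset V) :
    Submodular fun A => f (A ∪ T) := by
  intro A B
  dsimp only
  rw [union_union_distrib_right, inter_union_distrib_right]
  exact hf (A ∪ T) (B ∪ T)

theorem sub_le_sub_of_subset_s9 (hf : Submodular f) {A B : Finset V} {a : V} (hAB : A ⊆ B)
    (ha : a ∉ B) : f (insert a B) - f B ≤ f (insert a A) - f A := by
  have hunion : insert a A ∪ B = insert a B := by rw [insert_union, union_eq_right.mpr hAB]
  have hinter : insert a A ∩ B = A := by
    rw [insert_inter_of_notMem ha, inter_eq_left.mpr hAB]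
  have := hf (insert a A) B
  rw [hunion, hinter] at this
  linarith

end Submodular

section RandomSet

variable {V Ω : Type*} [DecidableEq V] [Fintype Ω] (μ : Ω → ℝ) (S : Ω → Finset V)

def memProb (v : V) : ℝ :=
  ∑ ω ∈ univ.filter (fun ω => v ∈ S ω), μ ω

variable {μ} {g : Finset V → ℝ}

theorem memProb_nonneg (hμ0 : ∀ ω, 0 ≤ μ ω) (v : V) : 0 ≤ memProb μ S v :=
  sum_nonneg fun ω _ => hμ0 ω

theorem memProb_mul_sub_le_sum_mul_inter_insert_sub (hg : Submodular g)
    (hμ0 : ∀ ω, 0 ≤ μ ω) {U : Finset V} {a : V} (ha : a ∉ U) :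
    memProb μ S a * (g (insert a U) - g U) ≤
      ∑ ω, μ ω * g (S ω ∩ insert a U) - ∑ ω, μ ω * g (S ω ∩ U) := by
  rw [memProb, sum_mul, sum_filter, ← sum_sub_distrib]
  refine sum_le_sum fun ω _ => ?_
  split_ifs with haS
  · rw [inter_insert_of_mem haS, ← mul_sub]
    exact mul_le_mul_of_nonneg_left
      (hg.sub_le_sub_of_subset_s9 inter_subset_right ha) (hμ0 ω)
  · rw [inter_insert_of_notMem haS, sub_self]

/-- The invariant of the sorted-insertion argument: `q` is any lower bound for the inclusion
probabilities on `U`, the role played by `pₙ` in the Abel summation. -/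
theorem one_sub_mul_add_mul_le_sum_mul_inter (hnn : ∀ A, 0 ≤ g A) (hg : Submodular g)
    (hμ0 : ∀ ω, 0 ≤ μ ω) (hμ1 : ∑ ω, μ ω = 1) {p : ℝ} (hmarg : ∀ v, memProb μ S v ≤ p)
    (U : Finset V) :
    ∀ q ≤ p, (∀ v ∈ U, q ≤ memProb μ S v) →
      (1 - p) * g ∅ + q * g U ≤ ∑ ω, μ ω * g (S ω ∩ U) := by
  induction U using induction_on_min_value (memProb μ S) with
  | empty =>
    intro q hqp _
    simp only [inter_empty, ← sum_mul, hμ1]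
    nlinarith [hnn ∅]
  | insert a U ha hmin ih =>
    intro q _ hq
    have hU := ih (memProb μ S a) (hmarg a) hmin
    have hstep := memProb_mul_sub_le_sum_mul_inter_insert_sub S hg hμ0 ha
    have hqa : q * g (insert a U) ≤ memProb μ S a * g (insert a U) :=
      mul_le_mul_of_nonneg_right (hq a (mem_insert_self a U)) (hnn _)
    linarith

theorem one_sub_mul_le_sum_mul (hnn : ∀ A, 0 ≤ g A) (hg : Submodular g)
    (hμ0 : ∀ ω, 0 ≤ μ ω) (hμ1 : ∑ ω, μ ω = 1) {p : ℝ} (hp : 0 ≤ p)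
    (hmarg : ∀ v, memProb μ S v ≤ p) :
    (1 - p) * g ∅ ≤ ∑ ω, μ ω * g (S ω) := by
  have h := one_sub_mul_add_mul_le_sum_mul_inter S hnn hg hμ0 hμ1 hmarg (univ.sup S) 0 hp
    fun v _ => memProb_nonneg S hμ0 v
  have hS : ∀ ω, S ω ∩ univ.sup S = S ω := fun ω => inter_eq_left.mpr (le_sup (mem_univ ω))
  simpa only [zero_mul, add_zero, hS] using h

end RandomSet

theorem expected_union_lower_bound_general {V : Type*} [DecidableEq V]
    (f : Finset V → ℝ) (hnn : ∀ A : Finset V, 0 ≤ f A) (hsub : Submodular f)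
    (T : Finset V) (p : ℝ) (hp : p ∈ Set.Icc (0 : ℝ) 1)
    {Ω : Type*} [Fintype Ω] (μ : Ω → ℝ) (hμ0 : ∀ ω, 0 ≤ μ ω) (hμ1 : ∑ ω, μ ω = 1)
    (S : Ω → Finset V)
    (hmarg : ∀ v : V, ∑ ω ∈ Finset.univ.filter (fun ω => v ∈ S ω), μ ω ≤ p) :
    (1 - p) * f T ≤ ∑ ω, μ ω * f (S ω ∪ T) := by
  simpa only [empty_union] using
    one_sub_mul_le_sum_mul S (fun A => hnn (A ∪ T)) (hsub.comp_union_right T) hμ0 hμ1 hp.1 hmarg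

/-- Lemma of Buchbinder–Feldman–Naor–Schwartz: if `f` is nonnegative submodular, `T` is fixed,
and `S` is a random set (from an arbitrary finitely supported distribution, here modeled by a
probability mass function `μ` on a finite outcome space `Ω`) such that each element lies in `S`
with probability at most `p`, then `E[f(S ∪ T)] ≥ (1 - p) f(T)`. -/
theorem expected_union_lower_bound {V : Type*} [DecidableEq V] [Fintype V]
    (f : Finset V → ℝ) (hnn : ∀ A : Finset V, 0 ≤ f A) (hsub : Submodular f)
    (T : Finset V) (p : ℝ) (hp : p ∈ Set.Icc (0 : ℝ) 1)
    {Ω : Type*} [Fintype Ω] (μ : Ω → ℝ) (hμ0 : ∀ ω, 0 ≤ μ ω) (hμ1 : ∑ ω, μ ω = 1)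
    (S : Ω → Finset V)
    (hmarg : ∀ v : V, ∑ ω ∈ Finset.univ.filter (fun ω => v ∈ S ω), μ ω ≤ p) :
    (1 - p) * f T ≤ ∑ ω, μ ω * f (S ω ∪ T) :=
  expected_union_lower_bound_general f hnn hsub T p hp μ hμ0 hμ1 S hmarg
end

section
/- Let v_1, …, v_n be an inductively k-independent ordering of a finite simple graph G with k ≥ 1, let w : V → ℝ_{≥0} be vertex weights, and let y : V → ℝ_{≥0} be a feasible dual solution, i.e., y_i + Σ_{v_j ∈ B_i} y_j ≥ w_i for every index i. Then every independent set T of G satisfies Σ_{v_i ∈ T} w_i ≤ k · Σ_{i=1}^n y_i. -/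
/-! Charge each `i ∈ T` to `y` on `{v_i} ∪ B_i`; feasibility makes this dominate `w i`. A vertex
`v_j` is charged by itself only if `j ∈ T`, and then by nobody else since `T` is independent;
otherwise only by vertices of `T ∩ A_j`, an independent subset of `A_j`, hence at most `k` times. -/

open Finset

theorem Finset.sum_sum_eq_sum_card_filter_mul {α β R : Type*} [Fintype β] [DecidableEq β]
    [NonAssocSemiring R] (s : Finset α) (t : α → Finset β) (f : β → R) :
    ∑ a ∈ s, ∑ b ∈ t a, f b = ∑ b, (#{a ∈ s | b ∈ t a} : R) * f b := by
  rw [Finset.sum_comm' (t' := univ) (s' := fun b => {a ∈ s | b ∈ t a})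
    (fun a b => by simp [and_comm])]
  simp only [sum_const, nsmul_eq_mul]

theorem self_notMem_earlierNbrs {n : ℕ} (G : SimpleGraph (Fin n)) [DecidableRel G.Adj]
    (i : Fin n) : i ∉ earlierNbrs G i := by
  simp [earlierNbrs]

theorem card_filter_mem_insert_earlierNbrs_le {n k : ℕ} (hk : 1 ≤ k)
    {G : SimpleGraph (Fin n)} [DecidableRel G.Adj] (hG : InductivelyKIndep G k)
    {T : Finset (Fin n)} (hT : IsIndep G T) (j : Fin n) :
    #{i ∈ T | j ∈ insert i (earlierNbrs G i)} ≤ k := by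
  by_cases hj : j ∈ T
  · have hsingle : {i ∈ T | j ∈ insert i (earlierNbrs G i)} ⊆ {j} := by
      intro i hi
      simp only [mem_filter, mem_insert, earlierNbrs, mem_univ, true_and] at hi
      rcases hi with ⟨hiT, rfl | ⟨hadj, -⟩⟩
      · exact mem_singleton_self _
      · exact absurd hadj (hT i hiT j hj)
    exact (card_le_card hsingle).trans (by simpa using hk)
  · have hlater : {i ∈ T | j ∈ insert i (earlierNbrs G i)} ⊆ laterNbrs G j := by
      intro i hi
      simp only [mem_filter, mem_insert, earlierNbrs, laterNbrs, mem_univ, true_and] at hi ⊢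
      rcases hi with ⟨hiT, rfl | ⟨hadj, hlt⟩⟩
      · exact absurd hiT hj
      · exact ⟨hadj.symm, hlt⟩
    exact hG j _ hlater (hT.mono (filter_subset _ _))

theorem mwis_weak_duality_general {n k : ℕ} (hk : 1 ≤ k)
    (G : SimpleGraph (Fin n)) [DecidableRel G.Adj]
    (hG : InductivelyKIndep G k)
    (w y : Fin n → ℝ) (hy : ∀ i, 0 ≤ y i)
    (hfeas : ∀ i : Fin n, w i ≤ y i + ∑ j ∈ earlierNbrs G i, y j)
    (T : Finset (Fin n)) (hT : IsIndep G T) :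
    ∑ i ∈ T, w i ≤ k * ∑ i, y i := by
  have hcharge (i : Fin n) : w i ≤ ∑ j ∈ insert i (earlierNbrs G i), y j := by
    rw [sum_insert (self_notMem_earlierNbrs G i)]
    exact hfeas i
  calc ∑ i ∈ T, w i ≤ ∑ i ∈ T, ∑ j ∈ insert i (earlierNbrs G i), y j :=
        sum_le_sum fun i _ => hcharge i
    _ = ∑ j, (#{i ∈ T | j ∈ insert i (earlierNbrs G i)} : ℝ) * y j :=
        sum_sum_eq_sum_card_filter_mul _ _ _
    _ ≤ ∑ j, (k : ℝ) * y j := by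
        gcongr with j
        · exact hy j
        · exact card_filter_mem_insert_earlierNbrs_le hk hG hT j
    _ = k * ∑ i, y i := (mul_sum _ _ _).symm

/-- Weak duality for the MWIS relaxation `Q_G`: a feasible dual `y` bounds the weight of every
independent set by `k` times the dual objective. -/
theorem mwis_weak_duality {n k : ℕ} (hk : 1 ≤ k)
    (G : SimpleGraph (Fin n)) [DecidableRel G.Adj]
    (hG : InductivelyKIndep G k)
    (w y : Fin n → ℝ) (hw : ∀ i, 0 ≤ w i) (hy : ∀ i, 0 ≤ y i)
    (hfeas : ∀ i : Fin n, w i ≤ y i + ∑ j ∈ earlierNbrs G i, y j)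
    (T : Finset (Fin n)) (hT : IsIndep G T) :
    ∑ i ∈ T, w i ≤ k * ∑ i, y i :=
  mwis_weak_duality_general hk G hG w y hy hfeas T hT
end

section
/- Let v_1, …, v_n enumerate the vertices of a finite simple graph G, let w, y : V → ℝ_{≥0}, and let S = {v_i : y_i > 0}. Suppose the dual constraints are tight on S: y_i + Σ_{v_j ∈ B_i} y_j = w_i for every v_i ∈ S. Let S′ ⊆ S be a set such that for every v_{i′} ∈ S \ S′ there exists v_i ∈ S′ with i > i′ and v_{i′} ∈ N(v_i) (the property of the output of the second phase, which pops S in reverse insertion order keeping a maximal independent set). Then Σ_{v_i ∈ S′} w_i ≥ Σ_{i=1}^n y_i. -/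
open Finset

/-! Every vertex of `S \ S'` is an earlier neighbour of some vertex of `S'`, so its dual is
counted in that vertex's tight constraint; summing the tight constraints over `S'` therefore
covers every positive dual. -/

theorem Finset.sum_le_sum_sum_of_forall_exists_mem {ι κ M : Type*} [AddCommMonoid M]
    [PartialOrder M] [IsOrderedAddMonoid M] {s : Finset ι} {t : Finset κ} {N : κ → Finset ι}
    {f : ι → M} (hf : ∀ i, 0 ≤ f i) (hcover : ∀ i ∈ s, ∃ j ∈ t, i ∈ N j) :
    ∑ i ∈ s, f i ≤ ∑ j ∈ t, ∑ i ∈ N j, f i := by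
  classical
  have hsub : s ⊆ (t.sigma N).image Sigma.snd := fun i hi =>
    let ⟨j, hj, hij⟩ := hcover i hi
    mem_image.2 ⟨⟨j, i⟩, mem_sigma.2 ⟨hj, hij⟩, rfl⟩
  calc ∑ i ∈ s, f i ≤ ∑ i ∈ (t.sigma N).image Sigma.snd, f i :=
        sum_le_sum_of_subset_of_nonneg hsub fun i _ _ => hf i
    _ ≤ ∑ x ∈ t.sigma N, f x.2 := sum_image_le_of_nonneg fun i _ => hf i
    _ = ∑ j ∈ t, ∑ i ∈ N j, f i := sum_sigma t N fun x => f x.2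

theorem sum_le_sum_earlierNbrs_of_forall_exists_adj {n : ℕ} (G : SimpleGraph (Fin n))
    [DecidableRel G.Adj] {y : Fin n → ℝ} (hy : ∀ i, 0 ≤ y i) {T S' : Finset (Fin n)}
    (hcover : ∀ i' ∈ T, ∃ i ∈ S', i' < i ∧ G.Adj i i') :
    ∑ i ∈ T, y i ≤ ∑ i ∈ S', ∑ j ∈ earlierNbrs G i, y j :=
  sum_le_sum_sum_of_forall_exists_mem hy fun i' hi' =>
    let ⟨i, hiS', hlt, hadj⟩ := hcover i' hi'
    ⟨i, hiS', mem_filter.2 ⟨mem_univ _, hadj, hlt⟩⟩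

theorem output_weight_ge_duals_general {n : ℕ}
    (G : SimpleGraph (Fin n)) [DecidableRel G.Adj]
    (w y : Fin n → ℝ) (hy : ∀ i, 0 ≤ y i)
    (S : Finset (Fin n)) (hSdef : ∀ i : Fin n, i ∈ S ↔ 0 < y i)
    (htight : ∀ i ∈ S, y i + ∑ j ∈ earlierNbrs G i, y j = w i)
    (S' : Finset (Fin n)) (hS'sub : S' ⊆ S)
    (hpop : ∀ i' ∈ S \ S', ∃ i ∈ S', i' < i ∧ G.Adj i i') :
    ∑ i, y i ≤ ∑ i ∈ S', w i := by
  have hy_zero : ∀ i ∉ S, y i = 0 := fun i hi =>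
    le_antisymm (not_lt.1 (mt (hSdef i).2 hi)) (hy i)
  calc ∑ i, y i = ∑ i ∈ S, y i :=
        (sum_subset (subset_univ S) fun i _ hi => hy_zero i hi).symm
    _ = ∑ i ∈ S \ S', y i + ∑ i ∈ S', y i := (sum_sdiff hS'sub).symm
    _ ≤ ∑ i ∈ S', ∑ j ∈ earlierNbrs G i, y j + ∑ i ∈ S', y i :=
        add_le_add_left (sum_le_sum_earlierNbrs_of_forall_exists_adj G hy hpop) _
    _ = ∑ i ∈ S', w i := by
        rw [add_comm, ← sum_add_distrib]
        exact sum_congr rfl fun i hi => htight i (hS'sub hi)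

/-- Lemma `weights>duals`: if the dual constraints are tight on `S = {vᵢ : yᵢ > 0}` and `S'`
has the pop property of the second phase, then `∑_{vᵢ ∈ S'} wᵢ ≥ ∑ᵢ yᵢ`. -/
theorem output_weight_ge_duals {n : ℕ}
    (G : SimpleGraph (Fin n)) [DecidableRel G.Adj]
    (w y : Fin n → ℝ) (hw : ∀ i, 0 ≤ w i) (hy : ∀ i, 0 ≤ y i)
    (S : Finset (Fin n)) (hSdef : ∀ i : Fin n, i ∈ S ↔ 0 < y i)
    (htight : ∀ i ∈ S, y i + ∑ j ∈ earlierNbrs G i, y j = w i)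
    (S' : Finset (Fin n)) (hS'sub : S' ⊆ S)
    (hpop : ∀ i' ∈ S \ S', ∃ i ∈ S', i' < i ∧ G.Adj i i') :
    ∑ i, y i ≤ ∑ i ∈ S', w i :=
  output_weight_ge_duals_general G w y hy S hSdef htight S' hS'sub hpop
end

section
/- Let V be a finite linearly ordered ground set, let f : 2^V → ℝ be a submodular function, let S ⊆ V, C ⊆ S, u ∈ V \ S, and β > 0. If f_S(u) ≥ (1+β) · Σ_{c∈C} ν_f(S, c), then f((S \ C) ∪ {u}) − f(S) ≥ β · Σ_{c∈C} ν_f(S, c). In particular, f((S \ C) ∪ {u}) − f(S) ≥ f_S(u) − Σ_{c∈C} ν_f(S, c). -/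
open Finset

/-!
Removing the elements of `C` from `S` in increasing order, the element `c` leaves a set containing
every element of `S` below `c`, so by diminishing returns it costs at most `ν_f(S, c)`; hence
`f S - f (S \ C) ≤ ∑_{c ∈ C} ν_f(S, c)`. Diminishing returns also gives
`f_S(u) ≤ f_{S \ C}(u)`, and adding the two inequalities yields the second claim, from which the
first follows by the hypothesis on `f_S(u)`.
-/

theorem Submodular.sub_le_sub_of_subset_s13 {V : Type*} [DecidableEq V] {f : Finset V → ℝ}
    (hf : Submodular f) {A B : Finset V} (hAB : A ⊆ B) {e : V} (he : e ∉ B) :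
    f (insert e B) - f B ≤ f (insert e A) - f A := by
  have h := hf (insert e A) B
  rw [insert_union, union_eq_right.mpr hAB, insert_inter_of_notMem he,
    inter_eq_left.mpr hAB] at h
  linarith

theorem Submodular.sub_sdiff_le_sum_incv {V : Type*} [LinearOrder V] {f : Finset V → ℝ}
    (hf : Submodular f) {S C : Finset V} (hCS : C ⊆ S) :
    f S - f (S \ C) ≤ ∑ c ∈ C, incv f S c := by
  induction C using Finset.induction_on_min with
  | empty => simp
  | insert m C hmC ih =>
    have hm : m ∉ C := fun h => lt_irrefl m (hmC m h)
    have hmS : m ∈ S \ C := mem_sdiff.mpr ⟨hCS (mem_insert_self m C), hm⟩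
    have hbelow : S.filter (· < m) ⊆ (S \ C).erase m := by
      intro x hx
      rw [mem_filter] at hx
      exact mem_erase.mpr ⟨hx.2.ne, mem_sdiff.mpr ⟨hx.1, fun hxC => (hmC x hxC).asymm hx.2⟩⟩
    have hlast : f (S \ C) - f (S \ insert m C) ≤ incv f S m := by
      have h := hf.sub_le_sub_of_subset_s13 hbelow (notMem_erase m (S \ C))
      rwa [insert_erase hmS, ← sdiff_insert] at h
    rw [sum_insert hm]
    linarith [ih ((subset_insert m C).trans hCS)]

theorem exchange_gain_general {V : Type*} [LinearOrder V]
    (f : Finset V → ℝ) (hsub : Submodular f)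
    (S C : Finset V) (hCS : C ⊆ S) (u : V) (hu : u ∉ S)
    (β : ℝ)
    (hcond : (1 + β) * ∑ c ∈ C, incv f S c ≤ f (insert u S) - f S) :
    β * ∑ c ∈ C, incv f S c ≤ f ((S \ C) ∪ {u}) - f S ∧
    (f (insert u S) - f S) - ∑ c ∈ C, incv f S c ≤ f ((S \ C) ∪ {u}) - f S := by
  have hremove := hsub.sub_sdiff_le_sum_incv hCS
  have hadd : f (insert u S) - f S ≤ f (insert u (S \ C)) - f (S \ C) :=
    hsub.sub_le_sub_of_subset_s13 sdiff_subset hu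
  rw [union_singleton]
  constructor <;> linarith

/-- Gain guarantee of a single exchange step of preemptive greedy (`deltavalue`): if
`f_S(u) ≥ (1+β) ∑_{c ∈ C} ν_f(S, c)` then
`f((S \ C) ∪ {u}) − f(S) ≥ β ∑_{c ∈ C} ν_f(S, c)`, and in particular
`f((S \ C) ∪ {u}) − f(S) ≥ f_S(u) − ∑_{c ∈ C} ν_f(S, c)`. -/
theorem exchange_gain {V : Type*} [Fintype V] [LinearOrder V]
    (f : Finset V → ℝ) (hsub : Submodular f)
    (S C : Finset V) (hCS : C ⊆ S) (u : V) (hu : u ∉ S)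
    (β : ℝ) (hβ : 0 < β)
    (hcond : (1 + β) * ∑ c ∈ C, incv f S c ≤ f (insert u S) - f S) :
    β * ∑ c ∈ C, incv f S c ≤ f ((S \ C) ∪ {u}) - f S ∧
    (f (insert u S) - f S) - ∑ c ∈ C, incv f S c ≤ f ((S \ C) ∪ {u}) - f S :=
  exchange_gain_general f hsub S C hCS u hu β hcond
end

section
/- Consider a run of the preemptive greedy algorithm with parameter β > 0 on a finite simple graph G with vertex enumeration v_1, …, v_n and a monotone, normalized, submodular function f, producing the sets S_0, …, S_n, the set U of all elements ever added, and exit values χ. Then Σ_{u ∈ U \ S_n} χ(u) ≤ (1/β) · f(S_n). -/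
open Finset

/-- The conflict set `C_i = N(v_i) ∩ S` of vertex `i` against the current set `S`. -/
def conflictSet {n : ℕ} (G : SimpleGraph (Fin n)) [DecidableRel G.Adj] (i : Fin n)
    (S : Finset (Fin n)) : Finset (Fin n) :=
  S.filter (fun u => G.Adj i u)

/-- Step `i` of the preemptive greedy algorithm with parameter `β` is accepted:
`f_{S_{i-1}}(v_i) ≥ (1+β) ∑_{c ∈ C_i} ν_f(S_{i-1}, c)`, where `S_{i-1} = S i.val`. -/
def AcceptedStep {n : ℕ} (G : SimpleGraph (Fin n)) [DecidableRel G.Adj]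
    (f : Finset (Fin n) → ℝ) (β : ℝ) (S : ℕ → Finset (Fin n)) (i : Fin n) : Prop :=
  (1 + β) * ∑ c ∈ conflictSet G i (S i.val), incv f (S i.val) c ≤
    f (insert i (S i.val)) - f (S i.val)

/-- `S : ℕ → Finset (Fin n)` is a run of the preemptive greedy algorithm with parameter `β`:
`S 0 = ∅`, and at each step `i` the vertex `v_i` is accepted (replacing its conflict set) iff
its marginal value is at least `(1+β)` times the total incremental value of its conflicts. -/
def IsGreedyRun {n : ℕ} (G : SimpleGraph (Fin n)) [DecidableRel G.Adj]
    (f : Finset (Fin n) → ℝ) (β : ℝ) (S : ℕ → Finset (Fin n)) : Prop :=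
  S 0 = ∅ ∧ ∀ i : Fin n,
    (AcceptedStep G f β S i →
      S (i.val + 1) = (S i.val \ conflictSet G i (S i.val)) ∪ {i}) ∧
    (¬ AcceptedStep G f β S i → S (i.val + 1) = S i.val)

/-- `U`: the set of all elements ever (even momentarily) added to the current set. -/
def everAdded {n : ℕ} (S : ℕ → Finset (Fin n)) : Finset (Fin n) :=
  (Finset.range (n + 1)).biUnion S

/-!
The incremental values of a set telescope to its value, and by submodularity removing a
subset `C` only raises the incremental values of the rest;
hence `f (T \ C) ≥ f T - ∑_{c ∈ C} ν(T, c)`.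
So an accepted step loses at most the exit values it creates, while the acceptance rule
gains `(1 + β)` times that much: each accepted step raises `f` by at least `β` times its new
exit values. By induction along the run, `β` times the total exit value so far is at most `f`
of the current set.
-/

section incv

variable {V : Type*} [LinearOrder V] {f : Finset V → ℝ}

lemma incv_insert_of_lt (s : Finset V) {a u : V} (h : u < a) :
    incv f (insert a s) u = incv f s u := by
  simp only [incv, filter_insert, if_neg h.not_gt]

lemma incv_insert_self {s : Finset V} {a : V} (h : ∀ x ∈ s, x < a) :
    incv f (insert a s) a = f (insert a s) - f s := by
  rw [incv, filter_insert, if_neg (lt_irrefl a), filter_true_of_mem h]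

theorem sum_incv_self (hnorm : f ∅ = 0) (T : Finset V) : ∑ u ∈ T, incv f T u = f T := by
  induction T using Finset.induction_on_max with
  | empty => simp [hnorm]
  | insert a s hlt ih =>
    have ha : a ∉ s := fun h => lt_irrefl a (hlt a h)
    rw [sum_insert ha, incv_insert_self hlt,
      sum_congr rfl fun u hu => incv_insert_of_lt s (hlt u hu), ih]
    ring

theorem Submodular.marginal_antitone (hsub : Submodular f) {A B : Finset V} (hAB : A ⊆ B)
    {x : V} (hx : x ∉ B) : f (insert x B) - f B ≤ f (insert x A) - f A := by
  have h := hsub (insert x A) B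
  rw [insert_union, union_eq_right.mpr hAB, insert_inter_of_notMem hx,
    inter_eq_left.mpr hAB] at h
  linarith

theorem Submodular.incv_antitone (hsub : Submodular f) {T' T : Finset V} (h : T' ⊆ T)
    (u : V) : incv f T u ≤ incv f T' u :=
  hsub.marginal_antitone (filter_subset_filter _ h) (by simp)

theorem Submodular.sub_sum_incv_le (hsub : Submodular f) (hnorm : f ∅ = 0)
    {T C : Finset V} (hC : C ⊆ T) : f T - ∑ c ∈ C, incv f T c ≤ f (T \ C) := by
  have hsplit : ∑ u ∈ T \ C, incv f T u + ∑ c ∈ C, incv f T c = f T := by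
    rw [sum_sdiff hC, sum_incv_self hnorm]
  have hrest : ∑ u ∈ T \ C, incv f T u ≤ f (T \ C) := by
    rw [← sum_incv_self hnorm (T \ C)]
    exact sum_le_sum fun u _ => hsub.incv_antitone sdiff_subset u
  linarith

end incv

section addedUpTo

variable {α : Type*} [DecidableEq α]

def addedUpTo (S : ℕ → Finset α) (m : ℕ) : Finset α :=
  (range (m + 1)).biUnion S

lemma addedUpTo_zero (S : ℕ → Finset α) : addedUpTo S 0 = S 0 := by
  simp [addedUpTo]

lemma addedUpTo_succ (S : ℕ → Finset α) (m : ℕ) :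
    addedUpTo S (m + 1) = addedUpTo S m ∪ S (m + 1) := by
  rw [addedUpTo, range_add_one, biUnion_insert, union_comm, addedUpTo]

lemma subset_addedUpTo (S : ℕ → Finset α) (m : ℕ) : S m ⊆ addedUpTo S m :=
  subset_biUnion_of_mem S (self_mem_range_succ m)

lemma sdiff_sdiff_union_singleton {A T C : Finset α} {i : α}
    (hTA : T ⊆ A) (hCT : C ⊆ T) (hi : i ∉ A) : A \ ((T \ C) ∪ {i}) = (A \ T) ∪ C := by
  ext u
  grind

end addedUpTo

namespace IsGreedyRun

variable {n : ℕ} {G : SimpleGraph (Fin n)} [DecidableRel G.Adj] {f : Finset (Fin n) → ℝ}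
  {β : ℝ} {S : ℕ → Finset (Fin n)}

theorem lt_of_mem (hrun : IsGreedyRun G f β S) {m : ℕ} (hm : m ≤ n) {u : Fin n}
    (hu : u ∈ S m) : (u : ℕ) < m := by
  induction m generalizing u with
  | zero => simp [hrun.1] at hu
  | succ m ih =>
    have hstep := hrun.2 ⟨m, hm⟩
    by_cases hacc : AcceptedStep G f β S ⟨m, hm⟩
    · rw [hstep.1 hacc, mem_union, mem_sdiff, mem_singleton] at hu
      rcases hu with ⟨hu, -⟩ | rfl
      · exact (ih (by omega) hu).trans (by omega)
      · exact Nat.lt_succ_self m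
    · rw [hstep.2 hacc] at hu
      exact (ih (by omega) hu).trans (by omega)

theorem notMem_addedUpTo (hrun : IsGreedyRun G f β S) (i : Fin n) :
    i ∉ addedUpTo S i := by
  simp only [addedUpTo, mem_biUnion, mem_range, not_exists, not_and]
  intro k hk hi
  have := hrun.lt_of_mem (by omega) hi
  omega

theorem add_mul_sum_incv_le (hsub : Submodular f) (hnorm : f ∅ = 0)
    (hrun : IsGreedyRun G f β S) {i : Fin n} (hacc : AcceptedStep G f β S i) :
    f (S i) + β * ∑ c ∈ conflictSet G i (S i), incv f (S i) c ≤ f (S (i + 1)) := by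
  have hiS : i ∉ S i := fun h => lt_irrefl _ (hrun.lt_of_mem i.isLt.le h)
  have hC : conflictSet G i (S i) ⊆ S i := filter_subset _ _
  have hmarg := hsub.marginal_antitone (sdiff_subset (t := conflictSet G i (S i))) hiS
  have hdrop := hsub.sub_sum_incv_le hnorm hC
  rw [(hrun.2 i).1 hacc, union_singleton]
  unfold AcceptedStep at hacc
  linarith

theorem mul_sum_exit_le (hsub : Submodular f) (hnorm : f ∅ = 0) (hrun : IsGreedyRun G f β S)
    {χ : Fin n → ℝ} (hχ : ∀ i : Fin n, AcceptedStep G f β S i →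
      ∀ u ∈ conflictSet G i (S i), χ u = incv f (S i) u) {m : ℕ} (hm : m ≤ n) :
    β * ∑ u ∈ addedUpTo S m \ S m, χ u ≤ f (S m) := by
  induction m with
  | zero => simp [addedUpTo_zero, hrun.1, hnorm]
  | succ m ih =>
    set i : Fin n := ⟨m, hm⟩
    have ih := ih (by omega)
    rw [addedUpTo_succ, union_sdiff_right]
    by_cases hacc : AcceptedStep G f β S i
    · have hC : conflictSet G i (S m) ⊆ S m := filter_subset _ _
      have hgain := hrun.add_mul_sum_incv_le hsub hnorm hacc
      rw [(hrun.2 i).1 hacc,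
        sdiff_sdiff_union_singleton (subset_addedUpTo S m) hC (hrun.notMem_addedUpTo i),
        sum_union (disjoint_sdiff_self_left.mono_right hC), sum_congr rfl (hχ i hacc), mul_add]
      rw [(hrun.2 i).1 hacc] at hgain
      linarith
    · rw [(hrun.2 i).2 hacc]
      exact ih

end IsGreedyRun

theorem exit_values_upper_bound_general {n : ℕ}
    (G : SimpleGraph (Fin n)) [DecidableRel G.Adj]
    (f : Finset (Fin n) → ℝ) (hsub : Submodular f)
    (hnorm : f ∅ = 0)
    (β : ℝ) (hβ : 0 < β)
    (S : ℕ → Finset (Fin n)) (hrun : IsGreedyRun G f β S)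
    (χ : Fin n → ℝ)
    (hχ : ∀ i : Fin n, AcceptedStep G f β S i →
      ∀ u ∈ conflictSet G i (S i.val), χ u = incv f (S i.val) u) :
    ∑ u ∈ everAdded S \ S n, χ u ≤ (1 / β) * f (S n) := by
  rw [one_div_mul_eq_div, le_div_iff₀ hβ, mul_comm]
  exact hrun.mul_sum_exit_le hsub hnorm hχ le_rfl

/-- Lemma `exit-values-upper-bound`: the total exit value of evicted elements is at most
`(1/β) f(S_n)`. Here `χ` assigns to each evicted element its incremental value just before
removal. -/
theorem exit_values_upper_bound {n : ℕ}
    (G : SimpleGraph (Fin n)) [DecidableRel G.Adj]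
    (f : Finset (Fin n) → ℝ) (hsub : Submodular f)
    (hmono : ∀ A B : Finset (Fin n), A ⊆ B → f A ≤ f B) (hnorm : f ∅ = 0)
    (β : ℝ) (hβ : 0 < β)
    (S : ℕ → Finset (Fin n)) (hrun : IsGreedyRun G f β S)
    (χ : Fin n → ℝ)
    (hχ : ∀ i : Fin n, AcceptedStep G f β S i →
      ∀ u ∈ conflictSet G i (S i.val), χ u = incv f (S i.val) u) :
    ∑ u ∈ everAdded S \ S n, χ u ≤ (1 / β) * f (S n) :=
  exit_values_upper_bound_general G f hsub hnorm β hβ S hrun χ hχ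
end
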